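/- Let ν ≥ 1 be an integer, let n_1 ≥ ⋯ ≥ n_r ≥ 1 and m_1 ≥ ⋯ ≥ m_s ≥ 1 be two nonincreasing finite sequences of positive integers, with conjugate sequences n^{(t)} = #{ p ∈ {1,…,r} : n_p ≥ t } and m^{(t)} = #{ q ∈ {1,…,s} : m_q ≥ t } for integers t ≥ 1. Then ∑_{p=1}^{r} ∑_{q=1}^{s} min(n_p, ν·m_q) = ∑_{t≥1} m^{(t)} · ( n^{(νt−ν+1)} + n^{(νt−ν+2)} + ⋯ + n^{(νt)} ), where the right-hand sum has only finitely many nonzero terms. (For ν = 2 this is the equality ∑_{p,q} min{n_p, 2 m_q} = ∑_{t≥1} m^{(t)} ( n^{(2t−1)} + n^{(2t)} ) used in the character computation for type F_4.) -/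

import Mathlib

/-! Both sides count the triples `(p, q, j)` with `1 ≤ j ≤ min (n p) (ν * m q)`. Summing first
over `p` turns `min (n p) c` into `nconj 1 + ⋯ + nconj c`; cutting `{1, …, ν * m q}` into the
`m q` blocks `{ν t + 1, …, ν t + ν}` and summing over `q` first, block `t` is counted
`#{q | t < m q} = mconj (t + 1)` times. -/

open Finset

section
variable {ι M : Type*} [AddCommMonoid M]

theorem Finset.finsum_card_filter_lt_smul (s : Finset ι) (m : ι → ℕ) (a : ℕ → M) :
    ∑ᶠ t, #{q ∈ s | t < m q} • a t = ∑ q ∈ s, ∑ t ∈ range (m q), a t := by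
  have hsupp : (Function.support fun t => #{q ∈ s | t < m q} • a t) ⊆ range (s.sup m) := by
    intro t ht
    obtain ⟨q, hq, htq⟩ := filter_nonempty_iff.1 (card_ne_zero.1 (left_ne_zero_of_smul ht))
    exact mem_range.2 (htq.trans_le (le_sup hq))
  rw [finsum_eq_sum_of_support_subset _ hsupp]
  simp_rw [card_eq_sum_ones, sum_smul, one_smul, sum_filter]
  rw [sum_comm]
  refine sum_congr rfl fun q hq => ?_
  rw [← sum_filter]
  congr 1
  ext t
  have hmq : m q ≤ s.sup m := le_sup hq
  simp only [mem_range, mem_filter]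
  omega

theorem Finset.sum_min_eq_sum_Ioc_card_filter (s : Finset ι) (f : ι → ℕ) (c : ℕ) :
    ∑ p ∈ s, min (f p) c = ∑ j ∈ Ioc 0 c, #{p ∈ s | j ≤ f p} := by
  simp_rw [card_filter]
  rw [sum_comm]
  refine sum_congr rfl fun p _ => ?_
  rw [← card_filter, show {j ∈ Ioc 0 c | j ≤ f p} = Ioc 0 (min (f p) c) by
      ext j; simp only [mem_filter, mem_Ioc, le_min_iff]; omega,
    Nat.card_Ioc, Nat.sub_zero]

theorem Finset.sum_range_sum_Ioc_mul (g : ℕ → M) (ν c : ℕ) :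
    ∑ t ∈ range c, ∑ j ∈ Ioc (ν * t) (ν * t + ν), g j = ∑ j ∈ Ioc 0 (ν * c), g j := by
  induction c with
  | zero => simp
  | succ c ih =>
    rw [sum_range_succ, ih, sum_Ioc_consecutive _ (Nat.zero_le _) (Nat.le_add_right _ _),
      mul_add_one]
end

theorem stmt_2_general (ν : ℕ) (r s : ℕ) (n m : ℕ → ℕ)
    (nconj mconj : ℕ → ℕ)
    (hnconj : ∀ t, 1 ≤ t → nconj t = ((Finset.Icc 1 r).filter fun p => t ≤ n p).card)
    (hmconj : ∀ t, 1 ≤ t → mconj t = ((Finset.Icc 1 s).filter fun q => t ≤ m q).card) :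
    ∑ p ∈ Finset.Icc 1 r, ∑ q ∈ Finset.Icc 1 s, min (n p) (ν * m q)
      = ∑ᶠ t : ℕ, mconj (t + 1) * ∑ j ∈ Finset.Icc (ν * t + 1) (ν * t + ν), nconj j := by
  have hmconj' (t : ℕ) : mconj (t + 1) = #{q ∈ Icc 1 s | t < m q} := by
    simp only [hmconj (t + 1) (Nat.le_add_left 1 t), Nat.add_one_le_iff]
  calc ∑ p ∈ Icc 1 r, ∑ q ∈ Icc 1 s, min (n p) (ν * m q)
      = ∑ q ∈ Icc 1 s, ∑ j ∈ Ioc 0 (ν * m q), nconj j := by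
        rw [sum_comm]
        refine sum_congr rfl fun q _ => ?_
        rw [sum_min_eq_sum_Ioc_card_filter]
        exact sum_congr rfl fun j hj => (hnconj j (mem_Ioc.1 hj).1).symm
    _ = ∑ᶠ t, #{q ∈ Icc 1 s | t < m q} • ∑ j ∈ Ioc (ν * t) (ν * t + ν), nconj j := by
        simp_rw [finsum_card_filter_lt_smul, sum_range_sum_Ioc_mul]
    _ = _ := by
        simp_rw [hmconj', smul_eq_mul, Icc_add_one_left_eq_Ioc]

/-- Let `ν ≥ 1`. For two nonincreasing sequences `n 1 ≥ … ≥ n r ≥ 1` and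
`m 1 ≥ … ≥ m s ≥ 1` of positive integers, with conjugate sequences
`nconj t = #{p ∈ {1,…,r} : n p ≥ t}` and `mconj t = #{q ∈ {1,…,s} : m q ≥ t}`, we have
`∑_{p=1}^r ∑_{q=1}^s min(n_p, ν·m_q)
  = ∑_{t ≥ 1} mconj t · (nconj (νt−ν+1) + nconj (νt−ν+2) + ⋯ + nconj (νt))`
(a finitely supported sum; the inner range `ν(t+1)−ν+1, …, ν(t+1)` for the 0-indexed
summation variable `t` is `Finset.Icc (ν*t+1) (ν*t+ν)`). -/
theorem stmt_2 (ν : ℕ) (hν : 1 ≤ ν) (r s : ℕ) (n m : ℕ → ℕ)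
    (hn_anti : ∀ p q, 1 ≤ p → p ≤ q → q ≤ r → n q ≤ n p)
    (hn_pos : ∀ p, 1 ≤ p → p ≤ r → 1 ≤ n p)
    (hm_anti : ∀ p q, 1 ≤ p → p ≤ q → q ≤ s → m q ≤ m p)
    (hm_pos : ∀ q, 1 ≤ q → q ≤ s → 1 ≤ m q)
    (nconj mconj : ℕ → ℕ)
    (hnconj : ∀ t, 1 ≤ t → nconj t = ((Finset.Icc 1 r).filter fun p => t ≤ n p).card)
    (hmconj : ∀ t, 1 ≤ t → mconj t = ((Finset.Icc 1 s).filter fun q => t ≤ m q).card) :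
    ∑ p ∈ Finset.Icc 1 r, ∑ q ∈ Finset.Icc 1 s, min (n p) (ν * m q)
      = ∑ᶠ t : ℕ, mconj (t + 1) * ∑ j ∈ Finset.Icc (ν * t + 1) (ν * t + ν), nconj j :=
  stmt_2_general ν r s n m nconj mconj hnconj hmconj
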